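/- For any densities p₁, p₂ and any measurable function f, E_{p₁}[U(f)] + E_{p₂}[U(−f)] ≥ 2·log 2 − KL(p₁ ‖ (p₁+p₂)/2) − KL(p₂ ‖ (p₁+p₂)/2), where U(t) = log(1+e^{−t}), with equality if and only if f = log(p₁/p₂) almost everywhere. -/

import Mathlib

set_option maxHeartbeats 1000000

open MeasureTheory Real

lemma log_ge_one_sub_inv {Y : ℝ} (hY : 0 < Y) : 1 - 1/Y ≤ Real.log Y := by
  have h := Real.log_le_sub_one_of_pos (show (0:ℝ) < 1/Y by positivity)
  rw [one_div, Real.log_inv] at h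
  rw [one_div]
  linarith

lemma log_eq_one_sub_inv {Y : ℝ} (hY : 0 < Y) (h : Real.log Y = 1 - 1/Y) : Y = 1 := by
  by_contra hne
  have hinv : (1/Y : ℝ) ≠ 1 := by
    rw [one_div]
    intro hc
    exact hne (by rw [← inv_inv Y, hc, inv_one])
  have h2 := Real.log_lt_sub_one_of_pos (show (0:ℝ) < 1/Y by positivity) hinv
  rw [one_div, Real.log_inv] at h2
  rw [one_div] at h
  linarith

lemma key (a b t : ℝ) (ha : 0 < a) (hb : 0 < b) :
    a * Real.log ((a+b)/a) + b * Real.log ((a+b)/b)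
      ≤ a * Real.log (1 + Real.exp (-t)) + b * Real.log (1 + Real.exp t) ∧
    (a * Real.log (1 + Real.exp (-t)) + b * Real.log (1 + Real.exp t)
      = a * Real.log ((a+b)/a) + b * Real.log ((a+b)/b) ↔ t = Real.log (a/b)) := by
  have hab : 0 < a + b := by linarith
  have he : 0 < Real.exp (-t) := Real.exp_pos _
  have he' : 0 < Real.exp t := Real.exp_pos _
  have h1 : (0:ℝ) < 1 + Real.exp (-t) := by linarith
  have h2 : (0:ℝ) < 1 + Real.exp t := by linarith
  obtain ⟨Y₁, hY₁⟩ : ∃ Y, Y = a * (1 + Real.exp (-t)) / (a + b) := ⟨_, rfl⟩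
  obtain ⟨Y₂, hY₂⟩ : ∃ Y, Y = b * (1 + Real.exp t) / (a + b) := ⟨_, rfl⟩
  have hY₁p : 0 < Y₁ := by rw [hY₁]; positivity
  have hY₂p : 0 < Y₂ := by rw [hY₂]; positivity
  have hlog1 : Real.log (1 + Real.exp (-t)) = Real.log Y₁ + Real.log ((a+b)/a) := by
    rw [hY₁, Real.log_div (by positivity) (by positivity),
        Real.log_div (by positivity) (by positivity),
        Real.log_mul (by positivity) (by positivity)]
    ring
  have hlog2 : Real.log (1 + Real.exp t) = Real.log Y₂ + Real.log ((a+b)/b) := by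
    rw [hY₂, Real.log_div (by positivity) (by positivity),
        Real.log_div (by positivity) (by positivity),
        Real.log_mul (by positivity) (by positivity)]
    ring
  have hsum : a * (1 - 1/Y₁) + b * (1 - 1/Y₂) = 0 := by
    have e1 : a * (1 - 1/Y₁) = a - (a+b) / (1 + Real.exp (-t)) := by
      rw [hY₁]; field_simp
    have e2 : b * (1 - 1/Y₂) = b - (a+b) / (1 + Real.exp t) := by
      rw [hY₂]; field_simp
    have hee : Real.exp (-t) * Real.exp t = 1 := by
      rw [← Real.exp_add]; simp
    have e3 : (a+b) / (1 + Real.exp (-t)) + (a+b) / (1 + Real.exp t) = a + b := by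
      field_simp
      nlinarith [hee]
    rw [e1, e2]; linarith
  have hb1 : 1 - 1/Y₁ ≤ Real.log Y₁ := log_ge_one_sub_inv hY₁p
  have hb2 : 1 - 1/Y₂ ≤ Real.log Y₂ := log_ge_one_sub_inv hY₂p
  have hineq : a * Real.log ((a+b)/a) + b * Real.log ((a+b)/b)
      ≤ a * Real.log (1 + Real.exp (-t)) + b * Real.log (1 + Real.exp t) := by
    rw [hlog1, hlog2]
    nlinarith [mul_le_mul_of_nonneg_left hb1 ha.le, mul_le_mul_of_nonneg_left hb2 hb.le]
  refine ⟨hineq, ?_, ?_⟩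
  · intro heq
    have hD : a * Real.log Y₁ + b * Real.log Y₂ = 0 := by
      rw [hlog1, hlog2] at heq; nlinarith
    have hA : 0 ≤ a * (Real.log Y₁ - (1 - 1/Y₁)) := by
      apply mul_nonneg ha.le; linarith
    have hB : 0 ≤ b * (Real.log Y₂ - (1 - 1/Y₂)) := by
      apply mul_nonneg hb.le; linarith
    have hAB : a * (Real.log Y₁ - (1 - 1/Y₁)) + b * (Real.log Y₂ - (1 - 1/Y₂)) = 0 := by
      nlinarith [hsum, hD]
    have hA0 : Real.log Y₁ = 1 - 1/Y₁ := by
      have hz : a * (Real.log Y₁ - (1 - 1/Y₁)) = 0 := by linarith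
      rcases mul_eq_zero.mp hz with h | h
      · exact absurd h (ne_of_gt ha)
      · linarith
    have hY1 : Y₁ = 1 := log_eq_one_sub_inv hY₁p hA0
    rw [hY₁, div_eq_one_iff_eq (ne_of_gt hab)] at hY1
    have hexp : Real.exp (-t) = b / a := by
      rw [eq_div_iff (ne_of_gt ha)]
      nlinarith [hY1]
    have ht : -t = Real.log (b/a) := by rw [← hexp, Real.log_exp]
    have : t = - Real.log (b/a) := by linarith
    rw [this, ← Real.log_inv, inv_div]
  · intro ht
    have hexp : Real.exp (-t) = b / a := by
      rw [ht, ← Real.log_inv, inv_div]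
      exact Real.exp_log (by positivity)
    have hexp' : Real.exp t = a / b := by
      rw [ht]
      exact Real.exp_log (by positivity)
    rw [hexp, hexp']
    have e1 : 1 + b / a = (a+b)/a := by field_simp
    have e2 : 1 + a / b = (a+b)/b := by field_simp; ring
    rw [e1, e2]

theorem dpo_lower_bound {α : Type*} [MeasurableSpace α] (μ : Measure α)
    (p₁ p₂ : α → ℝ) (f : α → ℝ) (hf : Measurable f)
    (hp₁ : ∀ z, 0 < p₁ z) (hp₂ : ∀ z, 0 < p₂ z)
    (hp₁i : Integrable p₁ μ) (hp₂i : Integrable p₂ μ)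
    (hp₁n : ∫ z, p₁ z ∂μ = 1) (hp₂n : ∫ z, p₂ z ∂μ = 1)
    (hU₁ : Integrable (fun z => p₁ z * Real.log (1 + Real.exp (-(f z)))) μ)
    (hU₂ : Integrable (fun z => p₂ z * Real.log (1 + Real.exp (f z))) μ)
    (hi₁ : Integrable (fun z => p₁ z * Real.log (p₁ z / ((p₁ z + p₂ z) / 2))) μ)
    (hi₂ : Integrable (fun z => p₂ z * Real.log (p₂ z / ((p₁ z + p₂ z) / 2))) μ) :
    (∫ z, p₁ z * Real.log (1 + Real.exp (-(f z))) ∂μ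
      + ∫ z, p₂ z * Real.log (1 + Real.exp (f z)) ∂μ
      ≥ 2 * Real.log 2
        - ∫ z, p₁ z * Real.log (p₁ z / ((p₁ z + p₂ z) / 2)) ∂μ
        - ∫ z, p₂ z * Real.log (p₂ z / ((p₁ z + p₂ z) / 2)) ∂μ) ∧
    (∫ z, p₁ z * Real.log (1 + Real.exp (-(f z))) ∂μ
      + ∫ z, p₂ z * Real.log (1 + Real.exp (f z)) ∂μ
      = 2 * Real.log 2
        - ∫ z, p₁ z * Real.log (p₁ z / ((p₁ z + p₂ z) / 2)) ∂μ
        - ∫ z, p₂ z * Real.log (p₂ z / ((p₁ z + p₂ z) / 2)) ∂μ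
      ↔ ∀ᵐ z ∂μ, f z = Real.log (p₁ z / p₂ z)) := by
  have hkey := fun z => key (p₁ z) (p₂ z) (f z) (hp₁ z) (hp₂ z)
  have hMfun : (fun z => p₁ z * Real.log ((p₁ z + p₂ z)/(p₁ z)) + p₂ z * Real.log ((p₁ z + p₂ z)/(p₂ z)))
      = fun z => (Real.log 2 * p₁ z - p₁ z * Real.log (p₁ z / ((p₁ z + p₂ z)/2)))
        + (Real.log 2 * p₂ z - p₂ z * Real.log (p₂ z / ((p₁ z + p₂ z)/2))) := by
    funext z
    have ha := hp₁ z; have hb := hp₂ z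
    have hab : 0 < p₁ z + p₂ z := by linarith
    rw [Real.log_div (ne_of_gt hab) (ne_of_gt ha), Real.log_div (ne_of_gt hab) (ne_of_gt hb),
        Real.log_div (ne_of_gt ha) (by positivity), Real.log_div (ne_of_gt hb) (by positivity),
        Real.log_div (ne_of_gt hab) (by norm_num : (2:ℝ) ≠ 0)]
    ring
  have hint1 : Integrable (fun z => Real.log 2 * p₁ z - p₁ z * Real.log (p₁ z / ((p₁ z + p₂ z)/2))) μ :=
    (hp₁i.const_mul (Real.log 2)).sub hi₁
  have hint2 : Integrable (fun z => Real.log 2 * p₂ z - p₂ z * Real.log (p₂ z / ((p₁ z + p₂ z)/2))) μ :=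
    (hp₂i.const_mul (Real.log 2)).sub hi₂
  have hMint : Integrable (fun z => p₁ z * Real.log ((p₁ z + p₂ z)/(p₁ z)) + p₂ z * Real.log ((p₁ z + p₂ z)/(p₂ z))) μ := by
    rw [hMfun]
    exact hint1.add hint2
  have hMval : ∫ z, (p₁ z * Real.log ((p₁ z + p₂ z)/(p₁ z)) + p₂ z * Real.log ((p₁ z + p₂ z)/(p₂ z))) ∂μ
      = 2 * Real.log 2
        - ∫ z, p₁ z * Real.log (p₁ z / ((p₁ z + p₂ z) / 2)) ∂μ
        - ∫ z, p₂ z * Real.log (p₂ z / ((p₁ z + p₂ z) / 2)) ∂μ := by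
    have hcm1 : Integrable (fun z => Real.log 2 * p₁ z) μ := hp₁i.const_mul (Real.log 2)
    have hcm2 : Integrable (fun z => Real.log 2 * p₂ z) μ := hp₂i.const_mul (Real.log 2)
    rw [hMfun, integral_add hint1 hint2,
        integral_sub hcm1 hi₁, integral_sub hcm2 hi₂,
        integral_const_mul, integral_const_mul, hp₁n, hp₂n]
    ring
  have hGE : ∀ z, (p₁ z * Real.log ((p₁ z + p₂ z)/(p₁ z)) + p₂ z * Real.log ((p₁ z + p₂ z)/(p₂ z)))
      ≤ p₁ z * Real.log (1 + Real.exp (-(f z))) + p₂ z * Real.log (1 + Real.exp (f z)) :=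
    fun z => (hkey z).1
  have hGint : Integrable (fun z => p₁ z * Real.log (1 + Real.exp (-(f z))) + p₂ z * Real.log (1 + Real.exp (f z))) μ := hU₁.add hU₂
  have hle := integral_mono hMint hGint hGE
  rw [hMval, integral_add hU₁ hU₂] at hle
  refine ⟨by linarith, ?_⟩
  have h0 := integral_eq_zero_iff_of_nonneg
    (f := fun z => (p₁ z * Real.log (1 + Real.exp (-(f z))) + p₂ z * Real.log (1 + Real.exp (f z)))
      - (p₁ z * Real.log ((p₁ z + p₂ z)/(p₁ z)) + p₂ z * Real.log ((p₁ z + p₂ z)/(p₂ z))))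
    (fun z => sub_nonneg.2 (hGE z)) (hGint.sub hMint)
  have hsubval : ∫ z, ((p₁ z * Real.log (1 + Real.exp (-(f z))) + p₂ z * Real.log (1 + Real.exp (f z)))
      - (p₁ z * Real.log ((p₁ z + p₂ z)/(p₁ z)) + p₂ z * Real.log ((p₁ z + p₂ z)/(p₂ z)))) ∂μ
      = (∫ z, p₁ z * Real.log (1 + Real.exp (-(f z))) ∂μ
          + ∫ z, p₂ z * Real.log (1 + Real.exp (f z)) ∂μ)
        - (2 * Real.log 2
          - ∫ z, p₁ z * Real.log (p₁ z / ((p₁ z + p₂ z) / 2)) ∂μ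
          - ∫ z, p₂ z * Real.log (p₂ z / ((p₁ z + p₂ z) / 2)) ∂μ) := by
    rw [integral_sub hGint hMint, integral_add hU₁ hU₂, hMval]
  constructor
  · intro heq
    have hz0 : ∫ z, ((p₁ z * Real.log (1 + Real.exp (-(f z))) + p₂ z * Real.log (1 + Real.exp (f z)))
        - (p₁ z * Real.log ((p₁ z + p₂ z)/(p₁ z)) + p₂ z * Real.log ((p₁ z + p₂ z)/(p₂ z)))) ∂μ = 0 := by
      rw [hsubval, heq]; ring
    filter_upwards [h0.mp hz0] with z hz
    have hz' : p₁ z * Real.log (1 + Real.exp (-(f z))) + p₂ z * Real.log (1 + Real.exp (f z))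
        = p₁ z * Real.log ((p₁ z + p₂ z)/(p₁ z)) + p₂ z * Real.log ((p₁ z + p₂ z)/(p₂ z)) := by
      have := hz
      simp only [Pi.zero_apply] at this
      linarith
    exact (hkey z).2.mp hz'
  · intro hae
    have haes : (fun z => (p₁ z * Real.log (1 + Real.exp (-(f z))) + p₂ z * Real.log (1 + Real.exp (f z)))
        - (p₁ z * Real.log ((p₁ z + p₂ z)/(p₁ z)) + p₂ z * Real.log ((p₁ z + p₂ z)/(p₂ z)))) =ᵐ[μ] 0 := by
      filter_upwards [hae] with z hz
      have := (hkey z).2.mpr hz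
      simp only [Pi.zero_apply]
      linarith
    have := h0.mpr haes
    rw [hsubval] at this
    linarith
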